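/- Let p : E → B be a fibration, (Q, δ, ε) a comonad on B, and (K, d, e) the lifted comonad. Then d is natural: for every morphism f : A → B in E, d_B ∘ K f = K K f ∘ d_A. Moreover d is coassociative: K(d_A) ∘ d_A = d_{K A} ∘ d_A. Hence (K, d, e) is a comonad on E. -/

import Mathlib

namespace GrayPaper

open CategoryTheory

universe v u v' u'

variable {𝔼 : Type u} [Category.{v} 𝔼] {𝔹 : Type u'} [Category.{v'} 𝔹]

/-- A morphism `f : X ⟶ Y` in `𝔼` is `p`-Cartesian. -/
def PCart (p : 𝔼 ⥤ 𝔹) {X Y : 𝔼} (f : X ⟶ Y) : Prop :=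
  ∀ {Z : 𝔼} (k : Z ⟶ Y) (u : p.obj Z ⟶ p.obj X),
    u ≫ p.map f = p.map k → ∃! l : Z ⟶ X, p.map l = u ∧ l ≫ f = k

/-- A cleavage for `p`: a choice of Cartesian lift for every morphism of `𝔹` into the image
of an object of `𝔼`.  This presents `p` as a (cloven) Grothendieck fibration. -/
structure Cleavage (p : 𝔼 ⥤ 𝔹) where
  dom : ∀ (A : 𝔼) {X : 𝔹}, (X ⟶ p.obj A) → 𝔼
  domEq : ∀ (A : 𝔼) {X : 𝔹} (u : X ⟶ p.obj A), p.obj (dom A u) = X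
  homOf : ∀ (A : 𝔼) {X : 𝔹} (u : X ⟶ p.obj A), dom A u ⟶ A
  hom_over : ∀ (A : 𝔼) {X : 𝔹} (u : X ⟶ p.obj A),
    p.map (homOf A u) = eqToHom (domEq A u) ≫ u
  cart : ∀ (A : 𝔼) {X : 𝔹} (u : X ⟶ p.obj A), PCart p (homOf A u)

variable (p : 𝔼 ⥤ 𝔹) (c : Cleavage p) (Q : Comonad 𝔹)

/-- The object part of the lifted comonad: `K A` is the domain of the chosen Cartesian lift
of `ε_{p A}`. -/
def liftObj (A : 𝔼) : 𝔼 := c.dom A (Q.ε.app (p.obj A))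

lemma liftObjEq (A : 𝔼) : p.obj (liftObj p c Q A) = Q.obj (p.obj A) := c.domEq A _

/-- The counit of the lifted comonad: the chosen Cartesian lift of `ε_{p A}`. -/
def liftCounit (A : 𝔼) : liftObj p c Q A ⟶ A := c.homOf A (Q.ε.app (p.obj A))

lemma liftCounit_over (A : 𝔼) :
    p.map (liftCounit p c Q A) = eqToHom (liftObjEq p c Q A) ≫ Q.ε.app (p.obj A) :=
  c.hom_over A _

lemma liftCounit_cart (A : 𝔼) : PCart p (liftCounit p c Q A) := c.cart A _

lemma liftMap_aux {A A' : 𝔼} (f : A ⟶ A') :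
    (eqToHom (liftObjEq p c Q A) ≫ Q.map (p.map f) ≫ eqToHom (liftObjEq p c Q A').symm) ≫
        p.map (liftCounit p c Q A') = p.map (liftCounit p c Q A ≫ f) := by
  rw [p.map_comp, liftCounit_over, liftCounit_over]
  simp

/-- The morphism part of the lifted comonad: the unique Cartesian filler over `Q (p f)`. -/
noncomputable def liftMap {A A' : 𝔼} (f : A ⟶ A') : liftObj p c Q A ⟶ liftObj p c Q A' :=
  ((c.cart A' (Q.ε.app (p.obj A')) (liftCounit p c Q A ≫ f)
      (eqToHom (liftObjEq p c Q A) ≫ Q.map (p.map f) ≫ eqToHom (liftObjEq p c Q A').symm)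
      (liftMap_aux p c Q f)).exists).choose

lemma liftComul_aux (A : 𝔼) :
    (eqToHom (liftObjEq p c Q A) ≫ Q.δ.app (p.obj A) ≫
        eqToHom (congrArg Q.obj (liftObjEq p c Q A)).symm ≫
        eqToHom (liftObjEq p c Q (liftObj p c Q A)).symm) ≫
      p.map (liftCounit p c Q (liftObj p c Q A)) = p.map (𝟙 (liftObj p c Q A)) := by
  rw [liftCounit_over, p.map_id]
  have h := Q.ε.naturality (eqToHom (liftObjEq p c Q A))
  rw [eqToHom_map] at h
  rw [show Q.ε.app (p.obj (liftObj p c Q A)) =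
        eqToHom (congrArg Q.obj (liftObjEq p c Q A)) ≫
          Q.ε.app (Q.obj (p.obj A)) ≫ eqToHom (liftObjEq p c Q A).symm from by
      rw [← Category.assoc, h]; simp]
  simp

/-- The comultiplication of the lifted comonad: the unique filler over `δ_{p A}` of the
identity of `K A` through `e_{K A}`. -/
noncomputable def liftComul (A : 𝔼) : liftObj p c Q A ⟶ liftObj p c Q (liftObj p c Q A) :=
  ((c.cart (liftObj p c Q A) (Q.ε.app (p.obj (liftObj p c Q A))) (𝟙 (liftObj p c Q A))
      (eqToHom (liftObjEq p c Q A) ≫ Q.δ.app (p.obj A) ≫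
        eqToHom (congrArg Q.obj (liftObjEq p c Q A)).symm ≫
        eqToHom (liftObjEq p c Q (liftObj p c Q A)).symm)
      (liftComul_aux p c Q A)).exists).choose


lemma PCart.hom_ext {X Y Z : 𝔼} {f : X ⟶ Y} (hf : PCart p f) {g h : Z ⟶ X}
    (hp : p.map g = p.map h) (hc : g ≫ f = h ≫ f) : g = h := by
  obtain ⟨l, -, hl⟩ := hf (g ≫ f) (p.map g) (p.map_comp g f).symm
  rw [hl g ⟨rfl, rfl⟩, hl h ⟨hp.symm, hc.symm⟩]

lemma liftObj_hom_ext {Z A : 𝔼} {g h : Z ⟶ liftObj p c Q A} (hp : p.map g = p.map h)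
    (hc : g ≫ liftCounit p c Q A = h ≫ liftCounit p c Q A) : g = h :=
  PCart.hom_ext p (liftCounit_cart p c Q A) hp hc

@[simp]
lemma map_liftMap {A A' : 𝔼} (f : A ⟶ A') :
    p.map (liftMap p c Q f) =
      eqToHom (liftObjEq p c Q A) ≫ Q.map (p.map f) ≫ eqToHom (liftObjEq p c Q A').symm :=
  (c.cart A' _ _ _ (liftMap_aux p c Q f)).exists.choose_spec.1

@[simp]
lemma liftMap_liftCounit {A A' : 𝔼} (f : A ⟶ A') :
    liftMap p c Q f ≫ liftCounit p c Q A' = liftCounit p c Q A ≫ f :=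
  (c.cart A' _ _ _ (liftMap_aux p c Q f)).exists.choose_spec.2

@[simp]
lemma map_liftComul (A : 𝔼) :
    p.map (liftComul p c Q A) =
      eqToHom (liftObjEq p c Q A) ≫ Q.δ.app (p.obj A) ≫
        eqToHom (congrArg Q.obj (liftObjEq p c Q A)).symm ≫
        eqToHom (liftObjEq p c Q (liftObj p c Q A)).symm :=
  (c.cart (liftObj p c Q A) _ _ _ (liftComul_aux p c Q A)).exists.choose_spec.1

@[simp]
lemma liftComul_liftCounit (A : 𝔼) :
    liftComul p c Q A ≫ liftCounit p c Q (liftObj p c Q A) = 𝟙 (liftObj p c Q A) :=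
  (c.cart (liftObj p c Q A) _ _ _ (liftComul_aux p c Q A)).exists.choose_spec.2

@[simp]
lemma liftComul_liftCounit_assoc (A : 𝔼) {Z : 𝔼} (h : liftObj p c Q A ⟶ Z) :
    liftComul p c Q A ≫ liftCounit p c Q (liftObj p c Q A) ≫ h = h := by
  rw [← Category.assoc, liftComul_liftCounit, Category.id_comp]

lemma liftComul_naturality_map {A A' : 𝔼} (f : A ⟶ A') :
    p.map (liftMap p c Q f ≫ liftComul p c Q A') =
      p.map (liftComul p c Q A ≫ liftMap p c Q (liftMap p c Q f)) := by
  simp only [Functor.map_comp, map_liftMap, map_liftComul, Functor.comp_obj, eqToHom_trans,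
    Category.assoc, eqToHom_trans_assoc, eqToHom_refl, Category.id_comp,
    NatTrans.naturality_assoc, Functor.comp_map, eqToHom_map]

lemma liftComul_coassoc_map (A : 𝔼) :
    p.map (liftComul p c Q A ≫ liftMap p c Q (liftComul p c Q A)) =
      p.map (liftComul p c Q A ≫ liftComul p c Q (liftObj p c Q A)) := by
  -- `Q.δ.app (p.obj (liftObj A))` appears and must be transported to `Q.δ.app (Q.obj (p.obj A))`
  simp only [Functor.map_comp, map_liftComul, Functor.comp_obj, eqToHom_trans, map_liftMap,
    eqToHom_map, Category.assoc, eqToHom_trans_assoc, eqToHom_refl, Category.id_comp,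
    Comonad.coassoc_assoc, NatTrans.congr Q.δ (liftObjEq p c Q A), Functor.comp_map]

/-- the comultiplication `d` of the lifted comonad is natural,
`K f ≫ d_B = d_A ≫ K K f`, and coassociative, `d_A ≫ K (d_A) = d_A ≫ d_{K A}`;
hence `(K, d, e)` is a comonad on `𝔼`. -/
theorem liftComul_natural_coassoc :
    (∀ {A A' : 𝔼} (f : A ⟶ A'),
      liftMap p c Q f ≫ liftComul p c Q A' =
        liftComul p c Q A ≫ liftMap p c Q (liftMap p c Q f)) ∧
    (∀ A : 𝔼,
      liftComul p c Q A ≫ liftMap p c Q (liftComul p c Q A) =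
        liftComul p c Q A ≫ liftComul p c Q (liftObj p c Q A)) :=
  ⟨fun f => liftObj_hom_ext p c Q (liftComul_naturality_map p c Q f) (by simp),
    fun A => liftObj_hom_ext p c Q (liftComul_coassoc_map p c Q A) (by simp)⟩

end GrayPaper
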